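/- Certificate of primal infeasibility from the HSDE: suppose u = (x,s,y,t,τ) ∈ K and v = (h,z,r,w,κ) ∈ K* satisfy v = Q u, τ = 0, and b^T y > 0. Then the decomposed primal problem is infeasible: there exists no x̂ ∈ R^N with A x̂ = b and H x̂ ∈ S. (Indeed, τ = 0 forces A^T y + H^T t = 0 with t = z ∈ S, so for any feasible x̂ one would get b^T y = (A x̂)^T y = −⟨H x̂, t⟩ ≤ 0 by self-duality of S, a contradiction.) -/

import Mathlib

open Matrix BigOperators

/-- Index type for the stacked (vectorized) semidefinite variables: one `|C_k| × |C_k|`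
block of coordinates for each clique `C_k`, so that its cardinality is `n_d = Σ_k |C_k|²`. -/
abbrev CliqueIdx {n p : ℕ} (C : Fin p → Finset (Fin n)) : Type :=
  Σ k : Fin p, Fin (C k).card × Fin (C k).card

/-- Membership in the product cone `S = S_1 × ⋯ × S_p` of vectorized PSD cones:
`s ∈ S` iff, for each clique `k`, the `|C_k| × |C_k|` matrix formed by the corresponding
block of coordinates of `s` is positive semidefinite. -/
def MemS {n p : ℕ} (C : Fin p → Finset (Fin n)) (s : CliqueIdx C → ℝ) : Prop :=
  ∀ k : Fin p,
    Matrix.PosSemidef (Matrix.of fun i j : Fin (C k).card => s ⟨k, (i, j)⟩)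

/-- Index type for the HSDE variables `u = (x, s, y, t, τ)` and `v = (h, z, r, w, κ)`. -/
abbrev HsdeIdx {n p : ℕ} (C : Fin p → Finset (Fin n)) (N m : ℕ) : Type :=
  Fin N ⊕ (CliqueIdx C ⊕ (Fin m ⊕ (CliqueIdx C ⊕ Unit)))

/-- Stacking of the five components into a single vector. -/
def stackVec {n p N m : ℕ} (C : Fin p → Finset (Fin n))
    (x : Fin N → ℝ) (s : CliqueIdx C → ℝ) (y : Fin m → ℝ) (t : CliqueIdx C → ℝ) (τ : ℝ) :
    HsdeIdx C N m → ℝ :=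
  Sum.elim x (Sum.elim s (Sum.elim y (Sum.elim t fun _ => τ)))

/-- The HSDE matrix
`Q = [[0, 0, −Aᵀ, −Hᵀ, c],[0, 0, 0, I, 0],[A, 0, 0, 0, −b],[H, −I, 0, 0, 0],[−cᵀ, 0, bᵀ, 0, 0]]`. -/
def hsdeQ {n p N m : ℕ} (C : Fin p → Finset (Fin n))
    (A : Matrix (Fin m) (Fin N) ℝ) (H : Matrix (CliqueIdx C) (Fin N) ℝ)
    (b : Fin m → ℝ) (c : Fin N → ℝ) :
    Matrix (HsdeIdx C N m) (HsdeIdx C N m) ℝ :=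
  fun i j =>
    match i, j with
    | Sum.inl i, Sum.inr (Sum.inr (Sum.inl j)) => -A j i
    | Sum.inl i, Sum.inr (Sum.inr (Sum.inr (Sum.inl j))) => -H j i
    | Sum.inl i, Sum.inr (Sum.inr (Sum.inr (Sum.inr _))) => c i
    | Sum.inr (Sum.inl i), Sum.inr (Sum.inr (Sum.inr (Sum.inl j))) =>
        if i = j then 1 else 0
    | Sum.inr (Sum.inr (Sum.inl i)), Sum.inl j => A i j
    | Sum.inr (Sum.inr (Sum.inl i)), Sum.inr (Sum.inr (Sum.inr (Sum.inr _))) => -b i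
    | Sum.inr (Sum.inr (Sum.inr (Sum.inl i))), Sum.inl j => H i j
    | Sum.inr (Sum.inr (Sum.inr (Sum.inl i))), Sum.inr (Sum.inl j) =>
        if i = j then -1 else 0
    | Sum.inr (Sum.inr (Sum.inr (Sum.inr _))), Sum.inl j => -c j
    | Sum.inr (Sum.inr (Sum.inr (Sum.inr _))), Sum.inr (Sum.inr (Sum.inl j)) => b j
    | _, _ => 0

-- Schur product theorem: the entry sum of `M ⊙ T` is `1ᵀ (M ⊙ T) 1 ≥ 0`.
lemma Matrix.PosSemidef.sum_mul_apply_nonneg {ι : Type*} [Fintype ι] {M T : Matrix ι ι ℝ}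
    (hM : M.PosSemidef) (hT : T.PosSemidef) : 0 ≤ ∑ i, ∑ j, M i j * T i j := by
  simpa [dotProduct, mulVec, Finset.mul_sum] using
    (hM.hadamard hT).dotProduct_mulVec_nonneg fun _ => 1

lemma MemS.dotProduct_nonneg {n p : ℕ} {C : Fin p → Finset (Fin n)} {u v : CliqueIdx C → ℝ}
    (hu : MemS C u) (hv : MemS C v) : 0 ≤ u ⬝ᵥ v := by
  rw [dotProduct, ← Finset.univ_sigma_univ, Finset.sum_sigma]
  refine Finset.sum_nonneg fun k _ => ?_
  rw [Fintype.sum_prod_type]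
  exact (hu k).sum_mul_apply_nonneg (hv k)

section Hsde

variable {n p N m : ℕ} {C : Fin p → Finset (Fin n)}

lemma stackVec_inj {x x' : Fin N → ℝ} {s s' : CliqueIdx C → ℝ} {y y' : Fin m → ℝ}
    {t t' : CliqueIdx C → ℝ} {τ τ' : ℝ} :
    stackVec C x s y t τ = stackVec C x' s' y' t' τ' ↔
      x = x' ∧ s = s' ∧ y = y' ∧ t = t' ∧ τ = τ' := by
  refine ⟨fun h => ?_, by rintro ⟨rfl, rfl, rfl, rfl, rfl⟩; rfl⟩
  simp only [stackVec, funext_iff, Sum.forall, Sum.elim_inl, Sum.elim_inr] at h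
  exact ⟨funext h.1, funext h.2.1, funext h.2.2.1, funext h.2.2.2.1, h.2.2.2.2 ()⟩

lemma hsdeQ_mulVec_stackVec (A : Matrix (Fin m) (Fin N) ℝ) (H : Matrix (CliqueIdx C) (Fin N) ℝ)
    (b : Fin m → ℝ) (c : Fin N → ℝ) (x : Fin N → ℝ) (s : CliqueIdx C → ℝ) (y : Fin m → ℝ)
    (t : CliqueIdx C → ℝ) (τ : ℝ) :
    hsdeQ C A H b c *ᵥ stackVec C x s y t τ =
      stackVec C (τ • c - Aᵀ *ᵥ y - Hᵀ *ᵥ t) t (A *ᵥ x - τ • b) (H *ᵥ x - s)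
        (b ⬝ᵥ y - c ⬝ᵥ x) := by
  ext (i | i | i | i | _)
    <;> simp only [hsdeQ, stackVec, mulVec, dotProduct, Fintype.sum_sum_type, Fintype.sum_unique,
      Sum.elim_inl, Sum.elim_inr, transpose_apply, Pi.sub_apply, Pi.smul_apply, smul_eq_mul,
      ite_mul, one_mul, zero_mul, neg_mul, Finset.sum_ite_eq, Finset.mem_univ, if_true,
      Finset.sum_const_zero, Finset.sum_neg_distrib]
    <;> ring

lemma not_exists_feasible_of_certificate {A : Matrix (Fin m) (Fin N) ℝ}
    {H : Matrix (CliqueIdx C) (Fin N) ℝ} {b : Fin m → ℝ} {y : Fin m → ℝ} {t : CliqueIdx C → ℝ}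
    (ht : MemS C t) (hdual : Aᵀ *ᵥ y + Hᵀ *ᵥ t = 0) (hby : 0 < b ⬝ᵥ y) :
    ¬ ∃ x : Fin N → ℝ, A *ᵥ x = b ∧ MemS C (H *ᵥ x) := by
  rintro ⟨x, rfl, hHx⟩
  have hpair : (A *ᵥ x) ⬝ᵥ y = -((H *ᵥ x) ⬝ᵥ t) := by
    rw [eq_neg_iff_add_eq_zero, dotProduct_comm, dotProduct_mulVec, dotProduct_comm (H *ᵥ x),
      dotProduct_mulVec, ← mulVec_transpose, ← mulVec_transpose, ← add_dotProduct, hdual,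
      zero_dotProduct]
  linarith [hHx.dotProduct_nonneg ht]

end Hsde

theorem hsde_primal_infeasibility_general {n p N m : ℕ} (C : Fin p → Finset (Fin n))
    (A : Matrix (Fin m) (Fin N) ℝ) (H : Matrix (CliqueIdx C) (Fin N) ℝ)
    (b : Fin m → ℝ) (c : Fin N → ℝ)
    (x : Fin N → ℝ) (s : CliqueIdx C → ℝ) (y : Fin m → ℝ) (t : CliqueIdx C → ℝ) (τ : ℝ)
    (h : Fin N → ℝ) (z : CliqueIdx C → ℝ) (r : Fin m → ℝ) (w : CliqueIdx C → ℝ) (κ : ℝ)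
    (hh : h = 0) (hz : MemS C z)
    (heq : stackVec C h z r w κ = (hsdeQ C A H b c) *ᵥ stackVec C x s y t τ)
    (hτ : τ = 0) (hby : 0 < b ⬝ᵥ y) :
    ¬ ∃ x' : Fin N → ℝ, A *ᵥ x' = b ∧ MemS C (H *ᵥ x') := by
  rw [hsdeQ_mulVec_stackVec, stackVec_inj, hh, hτ, zero_smul, zero_sub] at heq
  obtain ⟨hdual, rfl, -⟩ := heq
  exact not_exists_feasible_of_certificate hz
    (neg_eq_zero.mp (by rw [neg_add, ← sub_eq_add_neg, hdual])) hby

/-- **Certificate of primal infeasibility from the HSDE.** If `u = (x,s,y,t,τ) ∈ K` and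
`v = (h,z,r,w,κ) ∈ K*` satisfy `v = Q u`, `τ = 0` and `bᵀy > 0`, then the decomposed primal
problem is infeasible: there is no `x̂` with `A x̂ = b` and `H x̂ ∈ S`. -/
theorem hsde_primal_infeasibility {n p N m : ℕ} (C : Fin p → Finset (Fin n))
    (A : Matrix (Fin m) (Fin N) ℝ) (H : Matrix (CliqueIdx C) (Fin N) ℝ)
    (b : Fin m → ℝ) (c : Fin N → ℝ)
    (x : Fin N → ℝ) (s : CliqueIdx C → ℝ) (y : Fin m → ℝ) (t : CliqueIdx C → ℝ) (τ : ℝ)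
    (h : Fin N → ℝ) (z : CliqueIdx C → ℝ) (r : Fin m → ℝ) (w : CliqueIdx C → ℝ) (κ : ℝ)
    (hs : MemS C s) (hτK : 0 ≤ τ)
    (hh : h = 0) (hz : MemS C z) (hr : r = 0) (hw : w = 0) (hκ : 0 ≤ κ)
    (heq : stackVec C h z r w κ = (hsdeQ C A H b c) *ᵥ stackVec C x s y t τ)
    (hτ : τ = 0) (hby : 0 < b ⬝ᵥ y) :
    ¬ ∃ x' : Fin N → ℝ, A *ᵥ x' = b ∧ MemS C (H *ᵥ x') :=
  hsde_primal_infeasibility_general C A H b c x s y t τ h z r w κ hh hz heq hτ hby
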